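/- arXiv:2511.15568 — 3 statements merged into one kernel-verified Lean document; each statement's English description precedes it below -/
import Mathlib

section
/- Boundedness of the primitive Siegel transform in rank one (instance of Theorem B for SL₂, which has ℚ-rank 1): for every bounded Borel function f : ℝ² → ℝ whose support is a compact subset of ℝ² ∖ {0}, the supremum over g ∈ SL₂(ℝ) of |∑_{v ∈ ℤ² primitive} f(gv)| is finite. -/
open Matrix

noncomputable section

/-- The set of primitive vectors of `ℤ²`: vectors with coprime coordinates. -/
def primZ2 : Set (Fin 2 → ℤ) := {v | Int.gcd (v 0) (v 1) = 1}

lemma prim_parallel {v w : Fin 2 → ℤ} (hv : Int.gcd (v 0) (v 1) = 1)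
    (hw : Int.gcd (w 0) (w 1) = 1) (h : v 0 * w 1 - v 1 * w 0 = 0) : w = v ∨ w = -v := by
  obtain ⟨a, b, hab⟩ := Int.isCoprime_iff_gcd_eq_one.mpr hv
  set k := a * w 0 + b * w 1 with hk
  have h0 : w 0 = v 0 * k := by linear_combination (-(w 0)) * hab - b * h
  have h1 : w 1 = v 1 * k := by linear_combination (-(w 1)) * hab + a * h
  have hg : Int.gcd (v 0 * k) (v 1 * k) = 1 := by rw [← h0, ← h1]; exact hw
  rw [Int.gcd_mul_right, hv, one_mul] at hg
  rcases Int.natAbs_eq_iff.mp hg with hk1 | hk1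
  · left; funext i; fin_cases i <;> simp [h0, h1, hk1]
  · right; funext i; fin_cases i <;> simp [h0, h1, hk1]

lemma det_mulVec (A : Matrix (Fin 2) (Fin 2) ℝ) (x y : Fin 2 → ℝ) :
    A.mulVec x 0 * A.mulVec y 1 - A.mulVec x 1 * A.mulVec y 0
      = A.det * (x 0 * y 1 - x 1 * y 0) := by
  simp [Matrix.mulVec, dotProduct, Fin.sum_univ_two, Matrix.det_fin_two]
  ring

lemma floor_close {c x y : ℝ} (hc : 0 < c) (h : ⌊x / c⌋ = ⌊y / c⌋) : |x - y| < c := by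
  have hx1 := Int.floor_le (x / c)
  have hx2 := Int.lt_floor_add_one (x / c)
  have hy1 := Int.floor_le (y / c)
  have hy2 := Int.lt_floor_add_one (y / c)
  rw [h] at hx1 hx2
  have hxc : x / c * c = x := div_mul_cancel₀ x hc.ne'
  have hyc : y / c * c = y := div_mul_cancel₀ y hc.ne'
  rw [abs_lt]
  constructor <;> nlinarith [mul_pos hc hc]

/-- **Boundedness of the primitive Siegel transform in rank one** (instance of Theorem B for
`SL₂`, which has `ℚ`-rank `1`): for every bounded Borel function `f : ℝ² → ℝ` whose support is
a compact subset of `ℝ² ∖ {0}`, the supremum over `g ∈ SL₂(ℝ)` of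
`|∑_{v ∈ ℤ² primitive} f(gv)|` is finite. -/
theorem primitive_siegel_transform_bounded_SL2
    (f : (Fin 2 → ℝ) → ℝ) (hmeas : Measurable f) (hbdd : ∃ C : ℝ, ∀ v, |f v| ≤ C)
    (hsupp : ∃ K : Set (Fin 2 → ℝ), IsCompact K ∧ K ⊆ {v | v ≠ 0} ∧
      Function.support f ⊆ K) :
    ∃ M : ℝ, ∀ g : Matrix.SpecialLinearGroup (Fin 2) ℝ,
      |∑' v : primZ2,
        f ((g : Matrix (Fin 2) (Fin 2) ℝ).mulVec (fun i => ((v : Fin 2 → ℤ) i : ℝ)))| ≤ M := by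
  obtain ⟨C, hC⟩ := hbdd
  obtain ⟨K, hKc, hK0, hKsupp⟩ := hsupp
  rcases K.eq_empty_or_nonempty with hKe | hKne
  · refine ⟨0, fun g => ?_⟩
    have hf0 : ∀ x, f x = 0 := by
      intro x
      by_contra hx
      have : x ∈ K := hKsupp (Function.mem_support.mpr hx)
      rw [hKe] at this
      exact this
    simp [hf0]
  have hC0 : 0 ≤ C := le_trans (abs_nonneg _) (hC 0)
  obtain ⟨R₀, hR₀⟩ := hKc.isBounded.subset_closedBall 0
  set R : ℝ := max R₀ 1 with hR
  have hR1 : (1 : ℝ) ≤ R := le_max_right _ _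
  have hRpos : (0 : ℝ) < R := lt_of_lt_of_le one_pos hR1
  have hRK : ∀ x ∈ K, ∀ i, |x i| ≤ R := by
    intro x hx i
    have h1 : ‖x‖ ≤ R₀ := by
      have := hR₀ hx
      rwa [Metric.mem_closedBall, dist_zero_right] at this
    calc |x i| = ‖x i‖ := (Real.norm_eq_abs _).symm
      _ ≤ ‖x‖ := norm_le_pi_norm x i
      _ ≤ R₀ := h1
      _ ≤ R := le_max_left _ _
  obtain ⟨x₀, hx₀K, hx₀min⟩ := hKc.exists_isMinOn hKne continuous_norm.continuousOn
  set ε : ℝ := ‖x₀‖ with hε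
  have hεpos : 0 < ε := norm_pos_iff.mpr (hK0 hx₀K)
  have hεK : ∀ x ∈ K, ε ≤ ‖x‖ := fun x hx => hx₀min hx
  set c : ℝ := min (1 / (2 * R)) ε with hc
  have hcpos : 0 < c := lt_min (by positivity) hεpos
  set B : ℤ := ⌈R / c⌉ with hB
  set box : Finset (ℤ × ℤ) := Finset.Icc (-B) B ×ˢ Finset.Icc (-B) B with hbox
  refine ⟨box.card * C, fun g => ?_⟩
  set G : (Fin 2 → ℤ) → (Fin 2 → ℝ) :=
    fun v => (g : Matrix (Fin 2) (Fin 2) ℝ).mulVec (fun i => ((v i : ℝ))) with hG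
  set F : primZ2 → ℝ := fun v => f (G v) with hF
  have hmem : ∀ v : primZ2, F v ≠ 0 → G (v : Fin 2 → ℤ) ∈ K :=
    fun v hv => hKsupp (Function.mem_support.mpr hv)
  set φ : primZ2 → ℤ × ℤ := fun v => (⌊G v 0 / c⌋, ⌊G v 1 / c⌋) with hφ
  have hGneg : ∀ v : Fin 2 → ℤ, G (-v) = -G v := by
    intro v
    have : (fun i => (((-v) i : ℤ) : ℝ)) = -(fun i => ((v i : ℝ))) := by
      funext i; simp
    rw [hG]
    simp only [this, Matrix.mulVec_neg]
  -- key injectivity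
  have hinj : Set.InjOn φ (Function.support F) := by
    intro v hv w hw hvw
    by_contra hne
    have hvK := hmem v hv
    have hwK := hmem w hw
    have hd0 : |G w 0 - G v 0| < c :=
      floor_close hcpos (congrArg Prod.fst hvw).symm
    have hd1 : |G w 1 - G v 1| < c :=
      floor_close hcpos (congrArg Prod.snd hvw).symm
    have hvwZ : (v : Fin 2 → ℤ) ≠ (w : Fin 2 → ℤ) := fun h => hne (Subtype.ext h)
    by_cases hdet : (v : Fin 2 → ℤ) 0 * (w : Fin 2 → ℤ) 1
        - (v : Fin 2 → ℤ) 1 * (w : Fin 2 → ℤ) 0 = 0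
    · rcases prim_parallel v.2 w.2 hdet with h | h
      · exact hvwZ h.symm
      · -- w = -v, so G w = -G v and |2 G v i| < c ≤ ε, small norm contradiction
        have hGw : G (w : Fin 2 → ℤ) = -G (v : Fin 2 → ℤ) := by rw [h, hGneg]
        have h2 : ∀ i : Fin 2, ‖G (v : Fin 2 → ℤ) i‖ ≤ c / 2 := by
          intro i
          have hdi : |G w i - G v i| < c := by
            fin_cases i
            · exact hd0
            · exact hd1
          rw [hGw] at hdi
          have : |(-2 : ℝ) * G (v : Fin 2 → ℤ) i| < c := by
            convert hdi using 2
            simp [Pi.neg_apply]; ring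
          rw [abs_mul] at this
          rw [Real.norm_eq_abs]
          simp only [abs_neg, abs_two] at this
          linarith
        have hnorm : ‖G (v : Fin 2 → ℤ)‖ ≤ c / 2 :=
          (pi_norm_le_iff_of_nonneg (by positivity)).mpr h2
        have hεle : ε ≤ ‖G (v : Fin 2 → ℤ)‖ := hεK _ hvK
        have hcε : c ≤ ε := min_le_right _ _
        linarith
    · -- nonzero integer determinant: separation contradiction
      have h1le : (1 : ℝ) ≤ |((v : Fin 2 → ℤ) 0 * (w : Fin 2 → ℤ) 1
          - (v : Fin 2 → ℤ) 1 * (w : Fin 2 → ℤ) 0 : ℤ)| := by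
        exact_mod_cast Int.one_le_abs (by exact_mod_cast hdet)
      have hdetR : G (v : Fin 2 → ℤ) 0 * G (w : Fin 2 → ℤ) 1
          - G (v : Fin 2 → ℤ) 1 * G (w : Fin 2 → ℤ) 0
          = (((v : Fin 2 → ℤ) 0 * (w : Fin 2 → ℤ) 1
            - (v : Fin 2 → ℤ) 1 * (w : Fin 2 → ℤ) 0 : ℤ) : ℝ) := by
        rw [hG]
        rw [det_mulVec, Matrix.SpecialLinearGroup.det_coe, one_mul]
        push_cast
        ring
      have habs : (1 : ℝ) ≤ |G (v : Fin 2 → ℤ) 0 * G (w : Fin 2 → ℤ) 1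
          - G (v : Fin 2 → ℤ) 1 * G (w : Fin 2 → ℤ) 0| := by
        rw [hdetR]
        rw [← Int.cast_abs]
        exact_mod_cast h1le
      have hu0 : |G (v : Fin 2 → ℤ) 0| ≤ R := hRK _ hvK 0
      have hu1 : |G (v : Fin 2 → ℤ) 1| ≤ R := hRK _ hvK 1
      have hkey : G (v : Fin 2 → ℤ) 0 * G (w : Fin 2 → ℤ) 1
          - G (v : Fin 2 → ℤ) 1 * G (w : Fin 2 → ℤ) 0
          = G (v : Fin 2 → ℤ) 0 * (G (w : Fin 2 → ℤ) 1 - G (v : Fin 2 → ℤ) 1)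
            - G (v : Fin 2 → ℤ) 1 * (G (w : Fin 2 → ℤ) 0 - G (v : Fin 2 → ℤ) 0) := by ring
      have htri : |G (v : Fin 2 → ℤ) 0 * G (w : Fin 2 → ℤ) 1
          - G (v : Fin 2 → ℤ) 1 * G (w : Fin 2 → ℤ) 0|
          ≤ |G (v : Fin 2 → ℤ) 0| * |G (w : Fin 2 → ℤ) 1 - G (v : Fin 2 → ℤ) 1|
            + |G (v : Fin 2 → ℤ) 1| * |G (w : Fin 2 → ℤ) 0 - G (v : Fin 2 → ℤ) 0| := by
        rw [hkey, ← abs_mul, ← abs_mul]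
        exact (abs_sub _ _)
      have hc2R : c ≤ 1 / (2 * R) := min_le_left _ _
      have hq0 : |G (w : Fin 2 → ℤ) 0 - G (v : Fin 2 → ℤ) 0| < c := hd0
      have hq1 : |G (w : Fin 2 → ℤ) 1 - G (v : Fin 2 → ℤ) 1| < c := hd1
      have habs0 : 0 ≤ |G (w : Fin 2 → ℤ) 1 - G (v : Fin 2 → ℤ) 1| := abs_nonneg _
      have habs1 : 0 ≤ |G (w : Fin 2 → ℤ) 0 - G (v : Fin 2 → ℤ) 0| := abs_nonneg _
      have h2Rc : 2 * R * c ≤ 1 := by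
        rw [div_eq_inv_mul] at hc2R
        have := mul_le_mul_of_nonneg_left hc2R (by positivity : (0:ℝ) ≤ 2 * R)
        rw [mul_inv_cancel_left₀ (by positivity : (2*R : ℝ) ≠ 0)] at this
        linarith [this]
      nlinarith [mul_le_mul hu0 hq1.le habs0 hRpos.le,
        mul_le_mul hu1 hq0.le habs1 hRpos.le, abs_nonneg (G (v : Fin 2 → ℤ) 0),
        abs_nonneg (G (v : Fin 2 → ℤ) 1)]
  have hmaps : ∀ v ∈ Function.support F, φ v ∈ box := by
    intro v hv
    have hvK := hmem v hv
    have hbd : ∀ i : Fin 2, ⌊G (v : Fin 2 → ℤ) i / c⌋ ∈ Finset.Icc (-B) B := by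
      intro i
      have h1 : |G (v : Fin 2 → ℤ) i| ≤ R := hRK _ hvK i
      rw [abs_le] at h1
      rw [Finset.mem_Icc]
      constructor
      · rw [Int.le_floor]
        push_cast
        have h2 : (-R) / c ≤ G (v : Fin 2 → ℤ) i / c := (div_le_div_iff_of_pos_right hcpos).mpr h1.1
        have h3 : -(B : ℝ) ≤ (-R) / c := by
          rw [neg_div, neg_le_neg_iff]
          exact Int.le_ceil _
        linarith
      · have h2 : G (v : Fin 2 → ℤ) i / c ≤ R / c := (div_le_div_iff_of_pos_right hcpos).mpr h1.2
        calc ⌊G (v : Fin 2 → ℤ) i / c⌋ ≤ ⌊R / c⌋ := Int.floor_le_floor h2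
          _ ≤ B := Int.floor_le_ceil _
    rw [hbox, Finset.mem_product]
    exact ⟨hbd 0, hbd 1⟩
  have hfin : (Function.support F).Finite := by
    apply Set.Finite.of_finite_image _ hinj
    exact box.finite_toSet.subset (by
      rintro _ ⟨v, hv, rfl⟩
      exact hmaps v hv)
  have hzero : ∀ v ∉ hfin.toFinset, F v = 0 := by
    intro v hv
    by_contra h
    exact hv (hfin.mem_toFinset.mpr h)
  have htsum : ∑' v : primZ2, F v = ∑ v ∈ hfin.toFinset, F v := tsum_eq_sum hzero
  have hcard : hfin.toFinset.card ≤ box.card := by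
    apply Finset.card_le_card_of_injOn φ
    · intro v hv
      exact hmaps v (hfin.mem_toFinset.mp hv)
    · rw [Set.Finite.coe_toFinset]
      exact hinj
  calc |∑' v : primZ2, F v| = |∑ v ∈ hfin.toFinset, F v| := by rw [htsum]
    _ ≤ ∑ v ∈ hfin.toFinset, |F v| := Finset.abs_sum_le_sum_abs _ _
    _ ≤ ∑ v ∈ hfin.toFinset, C := Finset.sum_le_sum fun v _ => hC _
    _ = hfin.toFinset.card * C := by rw [Finset.sum_const, nsmul_eq_mul]
    _ ≤ box.card * C := mul_le_mul_of_nonneg_right (by exact_mod_cast hcard) hC0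

end
end

section
/- Unboundedness of the Siegel transform in higher rank (instance of the implication (1) ⇒ (2) of Theorem B: for n ≥ 3 the group SL_n has ℚ-rank at least 2, so the Siegel transform does not map into L^∞): assume n ≥ 3. For every r > 1, the function g ↦ #{v ∈ 𝒫 : r^{-1} < ‖g·v‖ < r} is unbounded on SL_n(ℝ); that is, for every M > 0 there exists g ∈ SL_n(ℝ) with #{v ∈ 𝒫 : r^{-1} < ‖g·v‖ < r} > M. -/
open MeasureTheory Matrix
open scoped NNReal ENNReal

noncomputable section

abbrev GrIdx (n ℓ : ℕ) := {s : Finset (Fin n) // s.card = ℓ}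

abbrev ExtV (n ℓ : ℕ) := EuclideanSpace ℝ (GrIdx n ℓ)

def idxEmb {n ℓ : ℕ} (s : GrIdx n ℓ) (i : Fin ℓ) : Fin n :=
  (s.1.orderIsoOfFin s.2 i : Fin n)

/-- The wedge product `w 0 ∧ ⋯ ∧ w (ℓ-1)` in Plücker coordinates. -/
def wedge (n ℓ : ℕ) (w : Fin ℓ → (Fin n → ℝ)) : ExtV n ℓ :=
  (WithLp.equiv 2 _).symm (fun s => Matrix.det (Matrix.of (fun i j => w j (idxEmb s i))))

/-- The set `X̃` of nonzero decomposable vectors. -/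
def decomposable (n ℓ : ℕ) : Set (ExtV n ℓ) :=
  {v | v ≠ 0 ∧ ∃ w : Fin ℓ → (Fin n → ℝ), v = wedge n ℓ w}

/-- The `ℓ`-th exterior-power (compound) action of a matrix on `ExtV n ℓ`. -/
def extAction (n ℓ : ℕ) (g : Matrix (Fin n) (Fin n) ℝ) (v : ExtV n ℓ) : ExtV n ℓ :=
  (WithLp.equiv 2 _).symm (fun s => ∑ t : GrIdx n ℓ,
    Matrix.det (g.submatrix (idxEmb s) (idxEmb t)) * v t)

/-- The lattice `⋀^ℓ(ℤ^n)`: vectors with integer coordinates. -/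
def extLattice (n ℓ : ℕ) : Set (ExtV n ℓ) := {v | ∀ s, ∃ m : ℤ, v s = (m : ℝ)}

def IsPrimitiveVec (n ℓ : ℕ) (v : ExtV n ℓ) : Prop :=
  v ∈ extLattice n ℓ ∧ v ≠ 0 ∧
    ¬ ∃ (m : ℤ) (w : ExtV n ℓ), 2 ≤ m ∧ w ∈ extLattice n ℓ ∧ v = (m : ℝ) • w

/-- The set `𝒫` of primitive lattice vectors lying in `X̃`. -/
def primSet (n ℓ : ℕ) : Set (ExtV n ℓ) :=
  {v | IsPrimitiveVec n ℓ v ∧ v ∈ decomposable n ℓ}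

abbrev SLn (n : ℕ) := Matrix.SpecialLinearGroup (Fin n) ℝ

instance (n m : ℕ) : MeasurableSpace (Matrix (Fin n) (Fin m) ℝ) :=
  inferInstanceAs (MeasurableSpace (Fin n → Fin m → ℝ))

instance (n : ℕ) : MeasurableSpace (SLn n) :=
  inferInstanceAs (MeasurableSpace {A : Matrix (Fin n) (Fin n) ℝ // A.det = 1})

/-- `Γ = SL_n(ℤ)`, viewed as a subgroup of `SL_n(ℝ)`. -/
def GammaSL (n : ℕ) : Subgroup (SLn n) :=
  (Matrix.SpecialLinearGroup.map (n := Fin n) (Int.castRingHom ℝ)).range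

/-- The Siegel transform, as a function on `SL_n(ℝ)`. -/
def siegel (n ℓ : ℕ) (f : ExtV n ℓ → ℝ) (g : SLn n) : ℝ :=
  ∑' v : primSet n ℓ, f (extAction n ℓ (g : Matrix (Fin n) (Fin n) ℝ) v)

/-- The Siegel transform, as a function on `Ω = SL_n(ℝ)/SL_n(ℤ)`. -/
def siegelOmega (n ℓ : ℕ) (f : ExtV n ℓ → ℝ) (x : SLn n ⧸ GammaSL n) : ℝ :=
  siegel n ℓ f x.out

/-- `f ∈ B_c^∞(X̃)`: bounded Borel, with support a compact subset of `X̃`. -/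
def MemBc (n ℓ : ℕ) (f : ExtV n ℓ → ℝ) : Prop :=
  Measurable f ∧ (∃ C : ℝ, ∀ v, |f v| ≤ C) ∧
    ∃ K : Set (ExtV n ℓ), IsCompact K ∧ K ⊆ decomposable n ℓ ∧ Function.support f ⊆ K

section SiegelAux

variable {n ℓ : ℕ}

lemma idxEmb_mem (s : GrIdx n ℓ) (i : Fin ℓ) : idxEmb s i ∈ s.1 :=
  (s.1.orderIsoOfFin s.2 i).2

lemma idxEmb_strictMono (s : GrIdx n ℓ) : StrictMono (idxEmb s) :=
  fun _ _ h => (s.1.orderEmbOfFin s.2).strictMono h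

lemma idxEmb_injective (s : GrIdx n ℓ) : Function.Injective (idxEmb s) :=
  (idxEmb_strictMono s).injective

lemma idxEmb_eq {s : GrIdx n ℓ} {f : Fin ℓ → Fin n} (hmem : ∀ i, f i ∈ s.1)
    (hmono : StrictMono f) : idxEmb s = f := by
  have h := Finset.orderEmbOfFin_unique s.2 hmem hmono
  funext i
  exact (congrFun h i).symm

lemma image_idxEmb (s : GrIdx n ℓ) : Finset.image (idxEmb s) Finset.univ = s.1 := by
  apply Finset.eq_of_subset_of_card_le
  · intro x hx
    obtain ⟨i, _, rfl⟩ := Finset.mem_image.1 hx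
    exact idxEmb_mem s i
  · rw [s.2, Finset.card_image_of_injective _ (idxEmb_injective s), Finset.card_univ,
      Fintype.card_fin]

lemma exists_mem_sdiff {s t : GrIdx n ℓ} (h : s ≠ t) : ∃ x ∈ s.1, x ∉ t.1 := by
  by_contra hc
  push_neg at hc
  exact h (Subtype.ext (Finset.eq_of_subset_of_card_le hc (by rw [s.2, t.2])))

lemma wedge_apply (w : Fin ℓ → (Fin n → ℝ)) (s : GrIdx n ℓ) :
    wedge n ℓ w s = Matrix.det (Matrix.of (fun i j => w j (idxEmb s i))) := rfl

lemma extAction_apply (g : Matrix (Fin n) (Fin n) ℝ) (v : ExtV n ℓ) (s : GrIdx n ℓ) :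
    extAction n ℓ g v s = ∑ t : GrIdx n ℓ,
      Matrix.det (g.submatrix (idxEmb s) (idxEmb t)) * v t := rfl

lemma wedge_basis (t : GrIdx n ℓ) :
    wedge n ℓ (fun j => Pi.single (idxEmb t j) (1:ℝ)) = EuclideanSpace.single t 1 := by
  ext s
  rw [wedge_apply, EuclideanSpace.single_apply]
  by_cases hst : s = t
  · subst hst
    rw [if_pos rfl]
    have : (Matrix.of fun i j => Pi.single (M := fun _ : Fin n => ℝ) (idxEmb s j) 1 (idxEmb s i))
        = (1 : Matrix (Fin ℓ) (Fin ℓ) ℝ) := by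
      ext i j
      simp [Matrix.one_apply, Pi.single_apply, (idxEmb_injective s).eq_iff, eq_comm]
    rw [this, Matrix.det_one]
  · rw [if_neg hst]
    obtain ⟨x, hxs, hxt⟩ := exists_mem_sdiff hst
    obtain ⟨i, _, hi⟩ := Finset.mem_image.1 ((image_idxEmb s).symm ▸ hxs)
    apply Matrix.det_eq_zero_of_row_eq_zero i
    intro j
    have : idxEmb s i ≠ idxEmb t j := by
      rw [hi]; intro h; exact hxt (h ▸ idxEmb_mem t j)
    simp [Pi.single_apply, this]

lemma wedge_update (w : Fin ℓ → (Fin n → ℝ)) (p : Fin ℓ) (u x : Fin n → ℝ) (c : ℝ) :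
    wedge n ℓ (Function.update w p (fun i => u i + c * x i)) =
      wedge n ℓ (Function.update w p u) + c • wedge n ℓ (Function.update w p x) := by
  ext s
  have key : ∀ y : Fin n → ℝ, (Matrix.of fun i j => Function.update w p y j (idxEmb s i))
      = (Matrix.of fun i j => w j (idxEmb s i)).updateCol p (fun i => y (idxEmb s i)) := by
    intro y
    ext i j
    by_cases h : j = p <;>
      simp [Function.update, Matrix.updateCol_apply, h]
  have happ : (wedge n ℓ (Function.update w p u) + c • wedge n ℓ (Function.update w p x)) s
      = wedge n ℓ (Function.update w p u) s + c * wedge n ℓ (Function.update w p x) s := rfl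
  rw [happ, wedge_apply, wedge_apply, wedge_apply, key, key, key]
  have : (fun i => (fun i' => u i' + c * x i') (idxEmb s i))
      = (fun i => u (idxEmb s i)) + c • (fun i => x (idxEmb s i)) := by
    funext i; simp [smul_eq_mul]
  rw [this, Matrix.det_updateCol_add, Matrix.det_updateCol_smul]

lemma extAction_diagonal_apply (d : Fin n → ℝ) (v : ExtV n ℓ) (s : GrIdx n ℓ) :
    extAction n ℓ (Matrix.diagonal d) v s = (∏ x ∈ s.1, d x) * v s := by
  rw [extAction_apply, Finset.sum_eq_single s]
  · congr 1
    rw [Matrix.submatrix_diagonal _ _ (idxEmb_injective s), Matrix.det_diagonal]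
    rw [← image_idxEmb s, Finset.prod_image (fun a _ b _ h => idxEmb_injective s h)]
    rfl
  · intro t _ hts
    obtain ⟨x, hxt, hxs⟩ := exists_mem_sdiff hts
    obtain ⟨j, _, hj⟩ := Finset.mem_image.1 ((image_idxEmb t).symm ▸ hxt)
    have hdet : Matrix.det ((Matrix.diagonal d).submatrix (idxEmb s) (idxEmb t)) = 0 := by
      apply Matrix.det_eq_zero_of_column_eq_zero j
      intro i
      have : idxEmb s i ≠ idxEmb t j := by
        rw [hj]; intro h; exact hxs (h ▸ idxEmb_mem s i)
      simp [Matrix.diagonal_apply_ne _ this]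
    rw [hdet, zero_mul]
  · intro h
    exact absurd (Finset.mem_univ s) h

lemma prod_two_ite {α : Type*} [Fintype α] [DecidableEq α] {p q : α} (hpq : p ≠ q)
    (x y : ℝ) (s : Finset α) :
    (∏ i ∈ s, (if i = p then x else if i = q then y else 1))
      = (if p ∈ s then x else 1) * (if q ∈ s then y else 1) := by
  have : ∀ i, (if i = p then x else if i = q then y else 1)
      = (if i = p then x else 1) * (if i = q then y else 1) := by
    intro i
    by_cases h1 : i = p <;> by_cases h2 : i = q <;> simp_all
  simp only [this, Finset.prod_mul_distrib, Finset.prod_ite_eq']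

lemma norm_pair {s0 s1 : GrIdx n ℓ} (h01 : s0 ≠ s1) (c : ℝ) :
    ‖(EuclideanSpace.single s0 (1:ℝ) + c • EuclideanSpace.single s1 (1:ℝ) : ExtV n ℓ)‖
      = Real.sqrt (1 + c ^ 2) := by
  rw [EuclideanSpace.norm_eq]
  congr 1
  have : ∀ s : GrIdx n ℓ,
      ‖(EuclideanSpace.single s0 (1:ℝ) + c • EuclideanSpace.single s1 (1:ℝ) : ExtV n ℓ) s‖ ^ 2
        = (if s = s0 then 1 else 0) + (if s = s1 then c ^ 2 else 0) := by
    intro s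
    have happ : (EuclideanSpace.single s0 (1:ℝ) + c • EuclideanSpace.single s1 (1:ℝ) : ExtV n ℓ) s
        = EuclideanSpace.single s0 (1:ℝ) s + c * EuclideanSpace.single s1 (1:ℝ) s := rfl
    rw [happ, EuclideanSpace.single_apply, EuclideanSpace.single_apply]
    by_cases h0 : s = s0 <;> by_cases h1 : s = s1 <;>
      simp_all [abs_of_nonneg, mul_pow, sq_abs]
  rw [Finset.sum_congr rfl (fun s _ => this s), Finset.sum_add_distrib]
  simp

end SiegelAux

/-- **Unboundedness of the Siegel transform in higher rank** (instance of the implication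
(1) ⇒ (2) of Theorem B: for `n ≥ 3` the group `SL_n` has `ℚ`-rank at least `2`):
for every `r > 1` and every `M`, there is `g ∈ SL_n(ℝ)` such that the annulus
`r⁻¹ < ‖g·v‖ < r` contains more than `M` elements of `𝒫`. -/
theorem siegel_transform_unbounded_higher_rank (n ℓ : ℕ) (hn : 3 ≤ n) (hℓ : 1 ≤ ℓ)
    (hℓn : ℓ < n) (r : ℝ) (hr : 1 < r) (M : ℕ) :
    ∃ g : SLn n, ∃ S : Finset (ExtV n ℓ),
      (∀ v ∈ S, v ∈ primSet n ℓ ∧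
        r⁻¹ < ‖extAction n ℓ (g : Matrix (Fin n) (Fin n) ℝ) v‖ ∧
        ‖extAction n ℓ (g : Matrix (Fin n) (Fin n) ℝ) v‖ < r) ∧
      M < S.card := by
  classical
  have hnn : n - 1 < n := by omega
  have hl1n : ℓ - 1 < n := by omega
  have h0n : 0 < n := by omega
  have hl1ℓ : ℓ - 1 < ℓ := by omega
  have hin : ∀ i : Fin ℓ, (i : ℕ) < n := fun i => lt_of_lt_of_le i.2 hℓn.le
  -- strictly monotone enumerations of the two index sets
  have hj0mono : StrictMono (fun i : Fin ℓ => (⟨i, hin i⟩ : Fin n)) :=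
    fun a b h => h
  have hf1mono : StrictMono (fun i : Fin ℓ =>
      if (i : ℕ) = ℓ - 1 then (⟨n - 1, hnn⟩ : Fin n) else ⟨i, hin i⟩) := by
    intro a b hab
    have hab' : (a : ℕ) < b := hab
    have ha := a.2; have hb := b.2
    dsimp only
    split_ifs with h1 h2 h2
    · exact absurd hab' (by omega)
    · exact absurd hab' (by omega)
    · exact Fin.mk_lt_mk.2 (by omega)
    · exact Fin.mk_lt_mk.2 (by omega)
  have hcard : ∀ f : Fin ℓ → Fin n, StrictMono f →
      (Finset.image f Finset.univ).card = ℓ := by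
    intro f hf
    rw [Finset.card_image_of_injective _ hf.injective, Finset.card_univ, Fintype.card_fin]
  set s0 : GrIdx n ℓ :=
    ⟨Finset.image (fun i : Fin ℓ => (⟨i, hin i⟩ : Fin n)) Finset.univ,
      hcard _ hj0mono⟩ with hs0def
  set s1 : GrIdx n ℓ :=
    ⟨Finset.image (fun i : Fin ℓ =>
        if (i : ℕ) = ℓ - 1 then (⟨n - 1, hnn⟩ : Fin n) else ⟨i, hin i⟩) Finset.univ,
      hcard _ hf1mono⟩ with hs1def
  have hidx0 : idxEmb s0 = fun i : Fin ℓ => (⟨i, hin i⟩ : Fin n) :=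
    idxEmb_eq (fun i => Finset.mem_image_of_mem _ (Finset.mem_univ i)) hj0mono
  have hidx1 : idxEmb s1 = fun i : Fin ℓ =>
      if (i : ℕ) = ℓ - 1 then (⟨n - 1, hnn⟩ : Fin n) else ⟨i, hin i⟩ :=
    idxEmb_eq (fun i => Finset.mem_image_of_mem _ (Finset.mem_univ i)) hf1mono
  have mem_s0 : ∀ x : Fin n, x ∈ s0.1 ↔ (x : ℕ) < ℓ := by
    intro x
    constructor
    · intro hx
      obtain ⟨i, _, rfl⟩ := Finset.mem_image.1 hx
      exact i.2
    · intro hx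
      exact Finset.mem_image.2 ⟨⟨x, hx⟩, Finset.mem_univ _, Fin.ext rfl⟩
  have mem_s1 : ∀ x : Fin n, x ∈ s1.1 ↔ ((x : ℕ) < ℓ - 1 ∨ (x : ℕ) = n - 1) := by
    intro x
    constructor
    · intro hx
      obtain ⟨i, _, rfl⟩ := Finset.mem_image.1 hx
      have hi2 := i.2
      by_cases h : (i : ℕ) = ℓ - 1
      · rw [if_pos h]
        right; rfl
      · rw [if_neg h]
        left
        show (i : ℕ) < ℓ - 1
        omega
    · rintro (hx | hx)
      · refine Finset.mem_image.2 ⟨⟨x, by omega⟩, Finset.mem_univ _, ?_⟩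
        dsimp only
        rw [if_neg (by show (x:ℕ) ≠ ℓ - 1; omega)]
      · refine Finset.mem_image.2 ⟨⟨ℓ - 1, hl1ℓ⟩, Finset.mem_univ _, ?_⟩
        dsimp only
        rw [if_pos rfl]
        exact Fin.ext (by show n - 1 = (x:ℕ); omega)
  have hs01 : s0 ≠ s1 := by
    intro h
    have h1 : (⟨n - 1, hnn⟩ : Fin n) ∈ s1.1 := (mem_s1 _).2 (Or.inr rfl)
    rw [← h, mem_s0] at h1
    have h2 : n - 1 < ℓ := h1
    omega
  -- numeric setup
  have hr0 : (0:ℝ) < r := lt_trans one_pos hr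
  have hr2 : (0:ℝ) < r ^ 2 - 1 := by nlinarith
  set δ : ℝ := Real.sqrt (r ^ 2 - 1) with hδdef
  have hδpos : 0 < δ := Real.sqrt_pos.2 hr2
  have hδ2 : δ ^ 2 = r ^ 2 - 1 := Real.sq_sqrt hr2.le
  set T : ℝ := ((M : ℝ) + 1) / δ with hTdef
  have hTpos : 0 < T := by positivity
  have hδT : δ * T = (M : ℝ) + 1 := by
    rw [hTdef]
    field_simp
  -- the diagonal matrix
  set p : Fin n := if ℓ + 1 < n then ⟨ℓ, hℓn⟩ else ⟨ℓ - 1, hl1n⟩ with hpdef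
  set q : Fin n := if ℓ + 1 < n then ⟨n - 1, hnn⟩ else ⟨0, h0n⟩ with hqdef
  have hpv : (p : ℕ) = if ℓ + 1 < n then ℓ else ℓ - 1 := by
    rw [hpdef]
    split_ifs <;> rfl
  have hqv : (q : ℕ) = if ℓ + 1 < n then n - 1 else 0 := by
    rw [hqdef]
    split_ifs <;> rfl
  have hpq : p ≠ q := by
    intro h
    have hh : (p : ℕ) = (q : ℕ) := by rw [h]
    rw [hpv, hqv] at hh
    split_ifs at hh <;> omega
  set d : Fin n → ℝ := fun i => if i = p then T else if i = q then T⁻¹ else 1 with hddef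
  have hprod : ∀ s : Finset (Fin n),
      (∏ x ∈ s, d x) = (if p ∈ s then T else 1) * (if q ∈ s then T⁻¹ else 1) := by
    intro s
    rw [hddef]
    exact prod_two_ite hpq T T⁻¹ s
  have hdet1 : (Matrix.diagonal d).det = 1 := by
    rw [Matrix.det_diagonal]
    rw [show (∏ i, d i) = ∏ i ∈ Finset.univ, d i from rfl, hprod]
    simp [mul_inv_cancel₀ hTpos.ne']
  have hP0 : (∏ x ∈ s0.1, d x) = 1 := by
    rw [hprod]
    by_cases h : ℓ + 1 < n
    · have hp' : p ∉ s0.1 := by rw [mem_s0, hpv, if_pos h]; omega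
      have hq' : q ∉ s0.1 := by rw [mem_s0, hqv, if_pos h]; omega
      rw [if_neg hp', if_neg hq', mul_one]
    · have hp' : p ∈ s0.1 := by rw [mem_s0, hpv, if_neg h]; omega
      have hq' : q ∈ s0.1 := by rw [mem_s0, hqv, if_neg h]; omega
      rw [if_pos hp', if_pos hq', mul_inv_cancel₀ hTpos.ne']
  have hP1 : (∏ x ∈ s1.1, d x) = T⁻¹ := by
    rw [hprod]
    by_cases h : ℓ + 1 < n
    · have hp' : p ∉ s1.1 := by rw [mem_s1, hpv, if_pos h]; omega
      have hq' : q ∈ s1.1 := by rw [mem_s1, hqv, if_pos h]; omega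
      rw [if_neg hp', if_pos hq', one_mul]
    · have hp' : p ∉ s1.1 := by rw [mem_s1, hpv, if_neg h]; omega
      have hq' : q ∈ s1.1 := by rw [mem_s1, hqv, if_neg h]; omega
      rw [if_neg hp', if_pos hq', one_mul]
  -- the family of vectors
  set lastℓ : Fin ℓ := ⟨ℓ - 1, hl1ℓ⟩ with hlastdef
  set va : ℕ → ExtV n ℓ := fun a =>
    EuclideanSpace.single s0 1 + (a : ℝ) • EuclideanSpace.single s1 1 with hvadef
  have hva_apply : ∀ (a : ℕ) (s : GrIdx n ℓ),
      va a s = (if s = s0 then 1 else 0) + (a : ℝ) * (if s = s1 then 1 else 0) := by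
    intro a s
    have h1 : va a s = EuclideanSpace.single s0 (1:ℝ) s
        + (a : ℝ) * EuclideanSpace.single s1 (1:ℝ) s := rfl
    rw [h1, EuclideanSpace.single_apply, EuclideanSpace.single_apply]
  have hupdate1 : Function.update (fun j => Pi.single (idxEmb s0 j) (1:ℝ) : Fin ℓ → Fin n → ℝ)
      lastℓ (Pi.single (idxEmb s1 lastℓ) (1:ℝ))
      = (fun j => Pi.single (idxEmb s1 j) (1:ℝ) : Fin ℓ → Fin n → ℝ) := by
    funext j
    by_cases hj : j = lastℓ
    · subst hj
      rw [Function.update_self]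
    · rw [Function.update_of_ne hj]
      have hval : idxEmb s0 j = idxEmb s1 j := by
        rw [hidx0, hidx1]
        dsimp only
        rw [if_neg (fun hc => hj (Fin.ext hc))]
      rw [hval]
  have hva_wedge : ∀ a : ℕ, va a = wedge n ℓ
      (Function.update (fun j => Pi.single (idxEmb s0 j) (1:ℝ) : Fin ℓ → Fin n → ℝ) lastℓ
        (fun i => (Pi.single (idxEmb s0 lastℓ) (1:ℝ) : Fin n → ℝ) i
          + (a : ℝ) * (Pi.single (idxEmb s1 lastℓ) (1:ℝ) : Fin n → ℝ) i)) := by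
    intro a
    rw [wedge_update, Function.update_eq_self, hupdate1, wedge_basis s0, wedge_basis s1,
      hvadef]
  have hva_s0 : ∀ a : ℕ, va a s0 = 1 := by
    intro a
    rw [hva_apply]
    simp [hs01]
  have hva_s1 : ∀ a : ℕ, va a s1 = (a : ℝ) := by
    intro a
    rw [hva_apply]
    simp [Ne.symm hs01]
  have hne : ∀ a : ℕ, va a ≠ 0 := by
    intro a h
    have h1 := hva_s0 a
    rw [h] at h1
    have h0 : (0 : ExtV n ℓ) s0 = 0 := rfl
    rw [h0] at h1
    exact one_ne_zero h1.symm
  have hlat : ∀ a : ℕ, va a ∈ extLattice n ℓ := by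
    intro a s
    refine ⟨(if s = s0 then 1 else 0) + (a : ℤ) * (if s = s1 then 1 else 0), ?_⟩
    rw [hva_apply a s]
    split_ifs <;> push_cast <;> ring
  have hprim : ∀ a : ℕ, IsPrimitiveVec n ℓ (va a) := by
    intro a
    refine ⟨hlat a, hne a, ?_⟩
    rintro ⟨m, w, hm, hw, hval⟩
    obtain ⟨k, hk⟩ := hw s0
    have h1 : va a s0 = (m : ℝ) * w s0 := by rw [hval]; rfl
    rw [hva_s0 a, hk] at h1
    have h2 : m * k = 1 := by exact_mod_cast h1.symm
    have h3 := Int.le_of_dvd one_pos ⟨k, h2.symm⟩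
    omega
  -- the action
  have hact : ∀ a : ℕ, extAction n ℓ (Matrix.diagonal d) (va a)
      = EuclideanSpace.single s0 1 + ((a : ℝ) / T) • EuclideanSpace.single s1 1 := by
    intro a
    ext s
    rw [extAction_diagonal_apply, hva_apply a s]
    have hrhs : (EuclideanSpace.single s0 1 + ((a : ℝ) / T) • EuclideanSpace.single s1 1
        : ExtV n ℓ) s = EuclideanSpace.single s0 (1:ℝ) s
          + ((a : ℝ) / T) * EuclideanSpace.single s1 (1:ℝ) s := rfl
    rw [hrhs, EuclideanSpace.single_apply, EuclideanSpace.single_apply]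
    split_ifs with h0 h1 h1
    · exact absurd (h0.symm.trans h1) hs01
    · rw [h0, hP0]
      ring
    · rw [h1, hP1, div_eq_mul_inv]
      ring
    · ring
  -- norms
  have hnorm : ∀ a : ℕ, a < M + 1 →
      r⁻¹ < ‖extAction n ℓ (Matrix.diagonal d) (va a)‖ ∧
        ‖extAction n ℓ (Matrix.diagonal d) (va a)‖ < r := by
    intro a ha
    rw [hact a, norm_pair hs01]
    have hc0 : (0:ℝ) ≤ (a : ℝ) / T := by positivity
    have hclt : (a : ℝ) / T < δ := by
      rw [div_lt_iff₀ hTpos, show δ * T = (M:ℝ) + 1 from hδT]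
      exact_mod_cast ha
    have hsq : ((a : ℝ) / T) ^ 2 < r ^ 2 - 1 := by nlinarith
    constructor
    · have h1 : (1:ℝ) ≤ Real.sqrt (1 + ((a : ℝ) / T) ^ 2) := by
        have h3 := Real.sqrt_le_sqrt (show (1:ℝ) ≤ 1 + ((a : ℝ) / T) ^ 2 by nlinarith)
        rwa [Real.sqrt_one] at h3
      have h2 : r⁻¹ < 1 := by
        rw [inv_lt_one_iff₀]
        right; exact hr
      linarith
    · rw [Real.sqrt_lt' hr0]
      linarith
  -- injectivity and the finset
  have hinj : Function.Injective va := by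
    intro a b hab
    have h := hva_s1 a
    rw [hab, hva_s1] at h
    exact Nat.cast_injective (R := ℝ) h.symm
  refine ⟨⟨Matrix.diagonal d, hdet1⟩, (Finset.range (M + 1)).image va, ?_, ?_⟩
  · intro v hv
    obtain ⟨a, ha, rfl⟩ := Finset.mem_image.1 hv
    rw [Finset.mem_range] at ha
    have hcoe : ((⟨Matrix.diagonal d, hdet1⟩ : Matrix.SpecialLinearGroup (Fin n) ℝ)
        : Matrix (Fin n) (Fin n) ℝ) = Matrix.diagonal d := rfl
    rw [hcoe]
    exact ⟨⟨hprim a, hne a, _, hva_wedge a⟩, (hnorm a ha).1, (hnorm a ha).2⟩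
  · rw [Finset.card_image_of_injective _ hinj, Finset.card_range]
    omega


end
end

section
/- Sup-norm transfer of incomplete Eisenstein series under finite index (the p = ∞ case of Lemma 3.1): if Γ₁, Γ₂ are subgroups of G such that the index m = [Γ₂ : Γ₁∩Γ₂] is finite, then sup_{g∈G} E_{Γ₂}(g) ≤ m · sup_{g∈G} E_{Γ₁}(g). -/
open scoped ENNReal

noncomputable section

/-- The incomplete Eisenstein series `E_Γ(g) = ∑_{γ ∈ Γ/(Γ∩L)} F(gγ)`, attached to a
right-`L`-invariant function `F : G → [0,∞)` and a subgroup `Γ ≤ G`.  The sum is taken over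
the left cosets `Γ/(Γ∩L)` (each summand is independent of the chosen representative by the
right-`L`-invariance of `F`). -/
def eisenstein {G : Type*} [Group G] (L : Subgroup G) (F : G → ℝ) (Γ : Subgroup G)
    (g : G) : ℝ≥0∞ :=
  ∑' q : Γ ⧸ L.subgroupOf Γ, ENNReal.ofReal (F (g * ((q.out : Γ) : G)))

/-- Representative independence: the value of `F` at `g * (⟦x⟧.out)` equals the value at
`g * x`. -/
lemma eisenstein_rep_indep {G : Type*} [Group G] (L : Subgroup G) (F : G → ℝ)
    (hFL : ∀ g : G, ∀ l ∈ L, F (g * l) = F g) (Γ : Subgroup G) (g : G) (x : Γ) :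
    F (g * (((QuotientGroup.mk x : Γ ⧸ L.subgroupOf Γ).out : Γ) : G)) = F (g * x) := by
  obtain ⟨h, hh⟩ := QuotientGroup.mk_out_eq_mul (L.subgroupOf Γ) x
  rw [hh]
  push_cast
  rw [← mul_assoc]
  exact hFL (g * x) h h.2

/-- **Sup-norm transfer of incomplete Eisenstein series under finite index** (the `p = ∞` case
of Lemma 3.1): if `m = [Γ₂ : Γ₁∩Γ₂]` is finite, then
`sup_{g∈G} E_{Γ₂}(g) ≤ m · sup_{g∈G} E_{Γ₁}(g)`. -/
theorem eisenstein_sup_transfer {G : Type*} [Group G] (L : Subgroup G) (F : G → ℝ)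
    (hF0 : ∀ g, 0 ≤ F g) (hFL : ∀ g : G, ∀ l ∈ L, F (g * l) = F g)
    (Γ₁ Γ₂ : Subgroup G) (hm : Γ₁.relIndex Γ₂ ≠ 0) :
    ⨆ g : G, eisenstein L F Γ₂ g ≤
      (Γ₁.relIndex Γ₂ : ℝ≥0∞) * ⨆ g : G, eisenstein L F Γ₁ g := by
  set K : Subgroup G := Γ₁ ⊓ Γ₂ with hK
  set S : ℝ≥0∞ := ⨆ g : G, eisenstein L F Γ₁ g with hS
  -- the quotient Γ₂ ⧸ Γ₁.subgroupOf Γ₂ is finite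
  have hfin : Finite (Γ₂ ⧸ Γ₁.subgroupOf Γ₂) := by
    have : Nat.card (Γ₂ ⧸ Γ₁.subgroupOf Γ₂) ≠ 0 := hm
    exact Nat.finite_of_card_ne_zero this
  -- inclusion maps
  let ιK₂ : K → Γ₂ := fun x => ⟨(x : G), x.2.2⟩
  let ιK₁ : K → Γ₁ := fun x => ⟨(x : G), x.2.1⟩
  -- the combining map
  let φ : (Γ₂ ⧸ Γ₁.subgroupOf Γ₂) × (K ⧸ L.subgroupOf K) → Γ₂ ⧸ L.subgroupOf Γ₂ :=
    fun pq => QuotientGroup.mk (pq.1.out * ιK₂ pq.2.out)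
  have hφ : Function.Surjective φ := by
    intro c
    set γ : Γ₂ := c.out with hγ
    set p : Γ₂ ⧸ Γ₁.subgroupOf Γ₂ := QuotientGroup.mk γ with hp
    have hmem : (p.out)⁻¹ * γ ∈ Γ₁.subgroupOf Γ₂ := by
      rw [← QuotientGroup.eq]
      simp [hp]
    refine ⟨⟨p, QuotientGroup.mk ⟨((p.out)⁻¹ * γ : Γ₂), hmem, ((p.out)⁻¹ * γ : Γ₂).2⟩⟩, ?_⟩
    show QuotientGroup.mk _ = c
    obtain ⟨l, hl⟩ := QuotientGroup.mk_out_eq_mul (L.subgroupOf K)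
      (⟨((p.out)⁻¹ * γ : Γ₂), hmem, ((p.out)⁻¹ * γ : Γ₂).2⟩ : K)
    rw [hl, ← QuotientGroup.out_eq' c, ← hγ, QuotientGroup.eq]
    rw [Subgroup.mem_subgroupOf]
    have : (((p.out * ιK₂ ((⟨((p.out)⁻¹ * γ : Γ₂), hmem, ((p.out)⁻¹ * γ : Γ₂).2⟩ : K) * l))⁻¹ * γ : Γ₂) : G)
        = (((l : K) : G))⁻¹ := by
      push_cast [ιK₂]
      simp [mul_inv_rev, mul_assoc]
    rw [this]
    exact inv_mem (Subgroup.mem_subgroupOf.mp l.2)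
  -- the injection for Γ₁
  let ψ : (K ⧸ L.subgroupOf K) → Γ₁ ⧸ L.subgroupOf Γ₁ :=
    fun q => QuotientGroup.mk (ιK₁ q.out)
  have hψ : Function.Injective ψ := by
    intro q q' h
    rw [QuotientGroup.eq] at h
    rw [← QuotientGroup.out_eq' q, ← QuotientGroup.out_eq' q', QuotientGroup.eq]
    rw [Subgroup.mem_subgroupOf] at h ⊢
    simpa [ιK₁] using h
  -- main estimate
  refine iSup_le fun g => ?_
  calc eisenstein L F Γ₂ g
      ≤ ∑' pq : (Γ₂ ⧸ Γ₁.subgroupOf Γ₂) × (K ⧸ L.subgroupOf K),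
          ENNReal.ofReal (F (g * ((φ pq).out : Γ₂))) :=
        ENNReal.tsum_le_tsum_comp_of_surjective hφ _
    _ = ∑' pq : (Γ₂ ⧸ Γ₁.subgroupOf Γ₂) × (K ⧸ L.subgroupOf K),
          ENNReal.ofReal (F ((g * (pq.1.out : Γ₂)) * ((pq.2.out : K) : G))) := by
        refine tsum_congr fun pq => ?_
        rw [show φ pq = QuotientGroup.mk (pq.1.out * ιK₂ pq.2.out) from rfl,
          eisenstein_rep_indep L F hFL Γ₂ g (pq.1.out * ιK₂ pq.2.out)]
        push_cast [ιK₂]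
        rw [mul_assoc]
    _ = ∑' p : Γ₂ ⧸ Γ₁.subgroupOf Γ₂, ∑' q : K ⧸ L.subgroupOf K,
          ENNReal.ofReal (F ((g * (p.out : Γ₂)) * ((q.out : K) : G))) :=
        ENNReal.tsum_prod (f := fun (p : Γ₂ ⧸ Γ₁.subgroupOf Γ₂) (q : K ⧸ L.subgroupOf K) =>
          ENNReal.ofReal (F ((g * ((p.out : Γ₂) : G)) * ((q.out : K) : G))))
    _ ≤ ∑' _ : Γ₂ ⧸ Γ₁.subgroupOf Γ₂, S := by
        refine ENNReal.tsum_le_tsum fun p => ?_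
        calc ∑' q : K ⧸ L.subgroupOf K,
                ENNReal.ofReal (F ((g * (p.out : Γ₂)) * ((q.out : K) : G)))
            = ∑' q : K ⧸ L.subgroupOf K,
                ENNReal.ofReal (F ((g * (p.out : Γ₂)) * (((ψ q).out : Γ₁) : G))) := by
              refine tsum_congr fun q => ?_
              rw [show ψ q = QuotientGroup.mk (ιK₁ q.out) from rfl,
                eisenstein_rep_indep L F hFL Γ₁ (g * (p.out : Γ₂)) (ιK₁ q.out)]
          _ ≤ eisenstein L F Γ₁ (g * (p.out : Γ₂)) :=
              ENNReal.tsum_comp_le_tsum_of_injective hψ _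
          _ ≤ S := le_iSup (fun h => eisenstein L F Γ₁ h) _
    _ = (Γ₁.relIndex Γ₂ : ℝ≥0∞) * S := by
        have := Fintype.ofFinite (Γ₂ ⧸ Γ₁.subgroupOf Γ₂)
        rw [tsum_eq_sum (s := Finset.univ) (by simp), Finset.sum_const, nsmul_eq_mul]
        congr 2
        rw [Subgroup.relIndex, Subgroup.index, Nat.card_eq_fintype_card, Finset.card_univ]

end
end
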